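/- arXiv:2512.13162 — 2 statements merged into one kernel-verified Lean document; each statement's English description precedes it below -/
import Mathlib

section
/- Let q be a prime power and let k, n, m be integers with 1 < k < n and m < n ≤ km. Set t = ⌊(km − n)/m⌋, a = n − (k − t − 2)m, and h = max{⌊a/2^{t+1}⌋, 1}. Then there exists a nondegenerate [n,k]_{q^m/q} rank-metric code C whose weight spectrum is exactly WS(C) = {h, h+1, …, m}; in particular, C has precisely m − h + 1 distinct nonzero rank weights. -/
/-!
Take a generator matrix that is block diagonal, the block of row `i` being
`(1, α, …, α ^ (v i - 1))` for a primitive element `α` of `L/K`, with block sizes `h ≤ v i ≤ m`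
summing to `n`. A codeword with `i`-th message symbol `x i ≠ 0` contains `x i, x i α, …`, so its
rank weight is at least `v i ≥ h`. Conversely, if every block is at most one longer than the blocks
before it together (or is at most `h`), then for each `w ∈ [h, m]` the blocks starting before
position `w` can be shifted, by multiplying their rows with powers of `α`, so that their exponents
cover `[0, w)` exactly, giving a codeword of weight `w`. Such block sizes exist as long as
`k h ≤ n` and `n` does not exceed the greedy maximum obtained from `v 0 = h`,
`v (i + 1) = min m (v 0 + ⋯ + v i + 1)`; this maximum grows like `(h + 1) 2 ^ i` until it reaches
`m`, and then by `m` per block, which is where `t`, `a` and `h` come from.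
-/

/-- The rank weight of a vector `v ∈ L^n`, where `L/K` is a field extension:
the `K`-dimension of the `K`-span of the entries of `v`. -/
noncomputable def rankWeight (K : Type*) [Field K] {L : Type*} [Field L] [Algebra K L]
    {n : ℕ} (v : Fin n → L) : ℕ :=
  Module.finrank K (Submodule.span K (Set.range v))

/-- The weight spectrum of a rank-metric code `C ⊆ L^n`: the set of rank weights of its
nonzero codewords. -/
noncomputable def weightSpectrum (K : Type*) [Field K] {L : Type*} [Field L] [Algebra K L]
    {n : ℕ} (C : Submodule L (Fin n → L)) : Set ℕ :=
  {w | ∃ c ∈ C, c ≠ 0 ∧ rankWeight K c = w}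

/-- A rank-metric code `C ⊆ L^n` is nondegenerate if for every nonzero `x ∈ K^n` there is a
codeword `c ∈ C` with `∑ j, x j • c j ≠ 0`. -/
def IsNondegenerate (K : Type*) [Field K] {L : Type*} [Field L] [Algebra K L]
    {n : ℕ} (C : Submodule L (Fin n → L)) : Prop :=
  ∀ x : Fin n → K, x ≠ 0 → ∃ c ∈ C, (∑ j, x j • c j) ≠ 0

open Finset

def maxBlockSum (h m : ℕ) : ℕ → ℕ
  | 0 => 0
  | i + 1 => maxBlockSum h m i + min m (max h (maxBlockSum h m i + 1))

structure AdmissibleBlocks (h m k n : ℕ) (v : ℕ → ℕ) : Prop where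
  sum_eq : ∑ i ∈ range k, v i = n
  le_size : ∀ i < k, h ≤ v i
  size_le : ∀ i < k, v i ≤ m
  size_le_max : ∀ i < k, v i ≤ max h (∑ j ∈ range i, v j + 1)

namespace maxBlockSum

variable {h m : ℕ}

lemma mul_le (hhm : h ≤ m) (k : ℕ) : k * h ≤ maxBlockSum h m k := by
  induction k with
  | zero => simp [maxBlockSum]
  | succ k ih => rw [maxBlockSum, add_one_mul]; omega

lemma min_two_pow_le (hhm : h ≤ m) (i : ℕ) :
    min ((h + 1) * 2 ^ i) (2 * m + 1) ≤ maxBlockSum h m (i + 1) + 1 := by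
  induction i with
  | zero => simp [maxBlockSum]; omega
  | succ i ih =>
    have hle : h ≤ maxBlockSum h m (i + 1) :=
      (Nat.le_mul_of_pos_left h i.succ_pos).trans (mul_le hhm _)
    rw [maxBlockSum, pow_succ, ← mul_assoc]
    omega

lemma add_mul_le {i : ℕ} (hi : m ≤ maxBlockSum h m i + 1) (j : ℕ) :
    maxBlockSum h m i + j * m ≤ maxBlockSum h m (i + j) := by
  induction j with
  | zero => simp
  | succ j ih => rw [← add_assoc, maxBlockSum, add_one_mul]; omega

end maxBlockSum

lemma le_maxBlockSum {h m a t : ℕ} (hhm : h ≤ m) (hma : m < a) (ham : a ≤ 2 * m)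
    (hah : a < (h + 1) * 2 ^ (t + 1)) (j : ℕ) : a + j * m ≤ maxBlockSum h m (t + 2 + j) := by
  have : min ((h + 1) * 2 ^ (t + 1)) (2 * m + 1) ≤ maxBlockSum h m (t + 2) + 1 :=
    maxBlockSum.min_two_pow_le hhm (t + 1)
  exact (Nat.add_le_add_right (by omega) _).trans (maxBlockSum.add_mul_le (by omega) j)

lemma exists_admissibleBlocks {h m : ℕ} (hhm : h ≤ m) {k n : ℕ} (hkn : k * h ≤ n)
    (hn : n ≤ maxBlockSum h m k) : ∃ v, AdmissibleBlocks h m k n v := by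
  induction k generalizing n with
  | zero => exact ⟨0, by simp_all [maxBlockSum], by simp, by simp, by simp⟩
  | succ k ih =>
    have hkh := maxBlockSum.mul_le hhm k
    rw [maxBlockSum] at hn
    rw [add_one_mul] at hkn
    -- the first `k` blocks take as much of `n` as they can, leaving at least `h` for the last
    set s := min (maxBlockSum h m k) (n - h)
    obtain ⟨v, hv⟩ := ih (n := s) (by omega) (by omega)
    have hprefix : ∀ i ≤ k, ∑ j ∈ range i, Function.update v k (n - s) j = ∑ j ∈ range i, v j :=
      fun i hi => sum_congr rfl fun j hj => Function.update_of_ne (by rw [mem_range] at hj; omega) ..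
    refine ⟨Function.update v k (n - s), ⟨?_, fun i hi => ?_, fun i hi => ?_, fun i hi => ?_⟩⟩
    · rw [sum_range_succ, hprefix k le_rfl, hv.sum_eq, Function.update_self]; omega
    · rw [Function.update_apply]
      split_ifs with hik
      · omega
      · exact hv.le_size i (by omega)
    · rw [Function.update_apply]
      split_ifs with hik
      · omega
      · exact hv.size_le i (by omega)
    · rw [Function.update_apply, hprefix i (by omega)]
      split_ifs with hik
      · subst hik; rw [hv.sum_eq]; omega
      · exact hv.size_le_max i (by omega)

lemma exists_le_lt_succ (f : ℕ → ℕ) {e k : ℕ} (h0 : f 0 ≤ e) (hk : e < f k) :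
    ∃ j < k, f j ≤ e ∧ e < f (j + 1) := by
  induction k with
  | zero => omega
  | succ k ih =>
    by_cases hek : e < f k
    · obtain ⟨j, hj, hje⟩ := ih hek
      exact ⟨j, by omega, hje⟩
    · exact ⟨k, by omega, by omega, hk⟩

section RankWeight

variable {K L : Type*} [Field K] [Field L] [Algebra K L] {n : ℕ}

lemma rankWeight_zero : rankWeight K (0 : Fin n → L) = 0 := by
  rw [rankWeight, Submodule.span_eq_bot.mpr (by rintro _ ⟨j, rfl⟩; rfl), finrank_bot]

lemma rankWeight_le_finrank [FiniteDimensional K L] (c : Fin n → L) :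
    rankWeight K c ≤ Module.finrank K L :=
  Submodule.finrank_le _

lemma LinearIndependent.card_le_rankWeight [FiniteDimensional K L] {ι : Type*} [Fintype ι]
    {f : ι → L} (hf : LinearIndependent K f) {c : Fin n → L} (hfc : Set.range f ⊆ Set.range c) :
    Fintype.card ι ≤ rankWeight K c := by
  rw [← finrank_span_eq_card hf]
  exact Submodule.finrank_mono (Submodule.span_mono hfc)

lemma rankWeight_eq_of_range_pow {α : L} {w : ℕ}
    (hα : LinearIndependent K fun p : Fin w => α ^ (p : ℕ)) {c : Fin n → L}
    (hc : Set.range c ⊆ insert 0 (Set.range fun p : Fin w => α ^ (p : ℕ)))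
    (hpow : Set.range (fun p : Fin w => α ^ (p : ℕ)) ⊆ Set.range c) :
    rankWeight K c = w := by
  have hspan : Submodule.span K (Set.range c) =
      Submodule.span K (Set.range fun p : Fin w => α ^ (p : ℕ)) :=
    le_antisymm ((Submodule.span_mono hc).trans (Submodule.span_insert_zero).le)
      (Submodule.span_mono hpow)
  rw [rankWeight, hspan, finrank_span_eq_card hα, Fintype.card_fin]

end RankWeight

lemma LinearIndependent.pow_of_le {K L : Type*} [Field K] [Field L] [Algebra K L] {α : L}
    {m : ℕ} (hα : LinearIndependent K fun p : Fin m => α ^ (p : ℕ)) {d : ℕ} (hd : d ≤ m) :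
    LinearIndependent K fun p : Fin d => α ^ (p : ℕ) :=
  hα.comp (Fin.castLE hd) (Fin.castLE_injective hd)

lemma exists_linearIndependent_pow (K L : Type*) [Field K] [Field L] [Algebra K L]
    [FiniteDimensional K L] [Algebra.IsSeparable K L] :
    ∃ α : L, LinearIndependent K fun p : Fin (Module.finrank K L) => α ^ (p : ℕ) := by
  let pb := Field.powerBasisOfFiniteOfSeparable K L
  refine ⟨pb.gen, ?_⟩
  rw [pb.finrank]
  simpa only [pb.coe_basis] using pb.basis.linearIndependent

section BlockCode

variable {K L : Type*} [Field K] [Field L] [Algebra K L] {k n : ℕ}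

/-- The encoder of the code whose generator matrix is block diagonal, the `i`-th block being the
row `(1, α, …, α ^ (v i - 1))`; the columns are indexed by the blocks through `E`. -/
def blockEncode (α : L) (v : ℕ → ℕ) (E : (Σ i : Fin k, Fin (v i)) ≃ Fin n) :
    (Fin k → L) →ₗ[L] Fin n → L where
  toFun x j := x (E.symm j).1 * α ^ ((E.symm j).2 : ℕ)
  map_add' x y := by ext; simp [add_mul]
  map_smul' c x := by ext; simp [mul_assoc]

variable {α : L} {v : ℕ → ℕ} {E : (Σ i : Fin k, Fin (v i)) ≃ Fin n}

@[simp]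
lemma blockEncode_apply_equiv (x : Fin k → L) (s : Σ i : Fin k, Fin (v i)) :
    blockEncode α v E x (E s) = x s.1 * α ^ (s.2 : ℕ) := by
  change x (E.symm (E s)).1 * α ^ ((E.symm (E s)).2 : ℕ) = _
  rw [E.symm_apply_apply]

lemma range_blockEncode (x : Fin k → L) :
    Set.range (blockEncode α v E x) =
      Set.range fun s : Σ i : Fin k, Fin (v i) => x s.1 * α ^ (s.2 : ℕ) := by
  rw [← E.surjective.range_comp]
  simp only [Function.comp_def, blockEncode_apply_equiv]

lemma blockEncode_injective (hv : ∀ i : Fin k, 0 < v i) :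
    Function.Injective (blockEncode α v E) := by
  intro x y hxy
  ext i
  simpa using congrFun hxy (E ⟨i, ⟨0, hv i⟩⟩)

lemma le_rankWeight_blockEncode [FiniteDimensional K L] {x : Fin k → L} {i : Fin k}
    (hx : x i ≠ 0) (hα : LinearIndependent K fun p : Fin (v i) => α ^ (p : ℕ)) :
    v i ≤ rankWeight K (blockEncode α v E x) := by
  have hαx : LinearIndependent K fun p : Fin (v i) => x i * α ^ (p : ℕ) :=
    hα.map' (LinearMap.mulLeft K (x i)) (LinearMap.ker_eq_bot.mpr (mul_right_injective₀ hx))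
  simpa using hαx.card_le_rankWeight (c := blockEncode α v E x)
    (by rw [range_blockEncode]; rintro _ ⟨p, rfl⟩; exact ⟨⟨i, p⟩, rfl⟩)

lemma isNondegenerate_range_blockEncode
    (hα : ∀ i : Fin k, LinearIndependent K fun p : Fin (v i) => α ^ (p : ℕ)) :
    IsNondegenerate K (LinearMap.range (blockEncode α v E)) := by
  intro y hy
  obtain ⟨j, hj⟩ := Function.ne_iff.mp hy
  obtain ⟨⟨i, p⟩, rfl⟩ := E.surjective j
  refine ⟨_, LinearMap.mem_range_self _ (Pi.single i 1), fun hzero => hj ?_⟩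
  rw [← E.sum_comp, ← univ_sigma_univ, sum_sigma] at hzero
  simp only [blockEncode_apply_equiv, Pi.single_apply, ite_mul, one_mul, zero_mul, smul_ite,
    smul_zero, sum_ite_irrel, sum_const_zero, sum_ite_eq', mem_univ, ↓reduceIte] at hzero
  exact Fintype.linearIndependent_iff.mp (hα i) _ hzero p

lemma exists_rankWeight_blockEncode_eq {h m w : ℕ} (hv : AdmissibleBlocks h m k n v)
    (hhw : h ≤ w) (hwn : w ≤ n) (hα : LinearIndependent K fun p : Fin w => α ^ (p : ℕ)) :
    ∃ x, rankWeight K (blockEncode α v E x) = w := by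
  set S := fun i => ∑ j ∈ range i, v j
  -- use the blocks starting before `w`, each at its own start `S i` unless it would overrun `w`,
  -- in which case it is moved left to end at `w`; by `size_le_max` it fits, and they cover `[0, w)`
  let x : Fin k → L := fun i => if S i < w then α ^ min (S i) (w - v i) else 0
  refine ⟨x, rankWeight_eq_of_range_pow hα ?_ ?_⟩
  · rw [range_blockEncode]
    rintro _ ⟨⟨i, p⟩, rfl⟩
    by_cases hi : S i < w
    · have : v i ≤ max h (S i + 1) := hv.size_le_max i i.2
      refine Or.inr ⟨⟨min (S i) (w - v i) + p, by omega⟩, ?_⟩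
      simp [x, hi, pow_add]
    · simp [x, hi]
  · rw [range_blockEncode]
    rintro _ ⟨e, rfl⟩
    obtain ⟨j, hjk, hje, hej⟩ :=
      exists_le_lt_succ S (by simp [S]) (e.2.trans_le (hwn.trans_eq hv.sum_eq.symm))
    have hS : S (j + 1) = S j + v j := sum_range_succ ..
    refine ⟨⟨⟨j, hjk⟩, ⟨e - min (S j) (w - v j), show _ < v j by omega⟩⟩, ?_⟩
    simp only [x, if_pos (show S j < w by omega), ← pow_add]
    congr 1
    omega

lemma weightSpectrum_range_blockEncode [FiniteDimensional K L] {h : ℕ}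
    (hv : AdmissibleBlocks h (Module.finrank K L) k n v) (hh : 1 ≤ h)
    (hmn : Module.finrank K L ≤ n)
    (hα : LinearIndependent K fun p : Fin (Module.finrank K L) => α ^ (p : ℕ)) :
    weightSpectrum K (LinearMap.range (blockEncode α v E)) = Set.Icc h (Module.finrank K L) := by
  ext w
  constructor
  · rintro ⟨_, ⟨x, rfl⟩, hc, rfl⟩
    obtain ⟨i, hi⟩ := Function.ne_iff.mp fun hx : x = 0 => hc (by rw [hx, map_zero])
    have hvi := le_rankWeight_blockEncode (E := E) hi (hα.pow_of_le (hv.size_le i i.2))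
    exact ⟨(hv.le_size i i.2).trans hvi, rankWeight_le_finrank _⟩
  · rintro ⟨hhw, hwm⟩
    obtain ⟨x, hx⟩ := exists_rankWeight_blockEncode_eq hv hhw (hwm.trans hmn) (hα.pow_of_le hwm)
    refine ⟨_, LinearMap.mem_range_self _ x, fun h0 => ?_, hx⟩
    rw [h0, rankWeight_zero] at hx
    omega

end BlockCode

theorem exists_code_of_admissibleBlocks {K L : Type*} [Field K] [Field L] [Algebra K L]
    [FiniteDimensional K L] [Algebra.IsSeparable K L] {h k n : ℕ} {v : ℕ → ℕ}
    (hv : AdmissibleBlocks h (Module.finrank K L) k n v) (hh : 1 ≤ h)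
    (hmn : Module.finrank K L ≤ n) :
    ∃ C : Submodule L (Fin n → L), Module.finrank L C = k ∧ IsNondegenerate K C ∧
      weightSpectrum K C = Set.Icc h (Module.finrank K L) := by
  obtain ⟨α, hα⟩ := exists_linearIndependent_pow K L
  have hcard : Fintype.card (Σ i : Fin k, Fin (v i)) = n := by
    simp [Fintype.card_sigma, Fin.sum_univ_eq_sum_range, hv.sum_eq]
  let E := Fintype.equivFinOfCardEq hcard
  have hvpos (i : Fin k) : 0 < v i := hh.trans (hv.le_size i i.2)
  refine ⟨LinearMap.range (blockEncode α v E), ?_, ?_,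
    weightSpectrum_range_blockEncode hv hh hmn hα⟩
  · rw [LinearMap.finrank_range_of_inj (blockEncode_injective hvpos), Module.finrank_fin_fun]
  · exact isNondegenerate_range_blockEncode fun i => hα.pow_of_le (hv.size_le i i.2)

lemma two_add_le_and_mem_Ioc {m n k t a : ℕ} (hmn : m < n) (hkm : n ≤ k * m)
    (ht : t = (k * m - n) / m) (ha : a = n - (k - t - 2) * m) :
    t + 2 ≤ k ∧ a ∈ Set.Ioc m (2 * m) ∧ n = a + (k - t - 2) * m := by
  have hm : 0 < m := Nat.pos_of_ne_zero fun h => by simp [h] at hkm; omega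
  have hD : k * m - n = t * m + (k * m - n) % m := by rw [ht, Nat.div_add_mod']
  have hr := Nat.mod_lt (k * m - n) hm
  generalize (k * m - n) % m = r at hD hr
  have htk : t + 2 ≤ k := by
    by_contra! hkt
    have : k * m ≤ t * m + m := by
      simpa [add_one_mul] using Nat.mul_le_mul_right m (by omega : k ≤ t + 1)
    omega
  obtain ⟨u, rfl⟩ : ∃ u, k = t + 2 + u := ⟨k - (t + 2), by omega⟩
  have hku : (t + 2 + u) * m = t * m + 2 * m + u * m := by ring
  rw [show t + 2 + u - t - 2 = u by omega] at ha ⊢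
  rw [hku] at hD hkm
  exact ⟨by omega, ⟨by omega, by omega⟩, by omega⟩

lemma max_div_two_pow_le {m a : ℕ} (hma : m < a) (ham : a ≤ 2 * m) (t : ℕ) :
    max (a / 2 ^ (t + 1)) 1 ≤ m := by
  have : a / 2 ^ (t + 1) ≤ a / 2 :=
    Nat.div_le_div_left (Nat.le_self_pow t.succ_ne_zero 2) two_pos
  omega

lemma lt_max_div_add_one_mul (a : ℕ) {d : ℕ} (hd : 0 < d) : a < (max (a / d) 1 + 1) * d := by
  calc a < d * (a / d + 1) := Nat.lt_mul_div_succ a hd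
    _ ≤ (max (a / d) 1 + 1) * d := by rw [mul_comm]; gcongr; exact le_max_left _ _

lemma mul_max_div_two_pow_le {m n k t a : ℕ} (hkn : k ≤ n) (htk : t + 2 ≤ k)
    (hn : n = a + (k - t - 2) * m) (hhm : max (a / 2 ^ (t + 1)) 1 ≤ m) :
    k * max (a / 2 ^ (t + 1)) 1 ≤ n := by
  rcases max_cases (a / 2 ^ (t + 1)) 1 with ⟨hmax, -⟩ | ⟨hmax, -⟩
  · rw [hmax] at hhm ⊢
    have hblock : (t + 2) * (a / 2 ^ (t + 1)) ≤ a :=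
      calc (t + 2) * (a / 2 ^ (t + 1)) ≤ 2 ^ (t + 1) * (a / 2 ^ (t + 1)) := by
            gcongr; exact Nat.lt_two_pow_self
        _ ≤ a := by rw [mul_comm]; exact Nat.div_mul_le_self a _
    calc k * (a / 2 ^ (t + 1))
        = (t + 2) * (a / 2 ^ (t + 1)) + (k - t - 2) * (a / 2 ^ (t + 1)) := by
          rw [← add_mul]; congr 1; omega
      _ ≤ a + (k - t - 2) * m := by gcongr
      _ = n := hn.symm
  · rw [hmax, mul_one]; exact hkn

theorem exists_code_weightSpectrum_Icc_of_gt_general (m n k t a h : ℕ)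
    (hkn : k < n) (hmn : m < n) (hkm : n ≤ k * m)
    (ht : t = (k * m - n) / m) (ha : a = n - (k - t - 2) * m)
    (hh : h = max (a / 2 ^ (t + 1)) 1)
    (K L : Type) [Field K] [Fintype K] [Field L] [Algebra K L]
    (hdeg : Module.finrank K L = m) :
    ∃ C : Submodule L (Fin n → L), Module.finrank L C = k ∧ IsNondegenerate K C ∧
      weightSpectrum K C = Set.Icc h m ∧
      (weightSpectrum K C).ncard = m - h + 1 := by
  obtain ⟨htk, ⟨hma, ham⟩, hn⟩ := two_add_le_and_mem_Ioc hmn hkm ht ha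
  have hhm : h ≤ m := hh ▸ max_div_two_pow_le hma ham t
  have hkh : k * h ≤ n := hh ▸ mul_max_div_two_pow_le hkn.le htk hn (hh ▸ hhm)
  have hnk : n ≤ maxBlockSum h m k := by
    have := le_maxBlockSum hhm hma ham (hh ▸ lt_max_div_add_one_mul a (by positivity))
      (k - t - 2)
    rwa [← hn, show t + 2 + (k - t - 2) = k by omega] at this
  obtain ⟨v, hv⟩ := exists_admissibleBlocks hhm hkh hnk
  have : FiniteDimensional K L := Module.finite_of_finrank_pos (by omega)
  obtain ⟨C, hCk, hCK, hspec⟩ :=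
    exists_code_of_admissibleBlocks (hdeg ▸ hv) (hh ▸ le_max_right _ _) (hdeg ▸ hmn.le)
  rw [hdeg] at hspec
  refine ⟨C, hCk, hCK, hspec, ?_⟩
  rw [hspec, Set.ncard_Icc_nat]
  omega

/-- Theorem (construction, case n > m): there exists a nondegenerate [n,k]_{q^m/q} code whose
weight spectrum is exactly {h, h+1, …, m}, where t = ⌊(km−n)/m⌋, a = n − (k−t−2)m and
h = max{⌊a/2^{t+1}⌋, 1}. -/
theorem exists_code_weightSpectrum_Icc_of_gt (q m n k t a h : ℕ) (hq : IsPrimePow q)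
    (hk : 1 < k) (hkn : k < n) (hmn : m < n) (hkm : n ≤ k * m)
    (ht : t = (k * m - n) / m) (ha : a = n - (k - t - 2) * m)
    (hh : h = max (a / 2 ^ (t + 1)) 1)
    (K L : Type) [Field K] [Fintype K] [Field L] [Algebra K L]
    (hcard : Fintype.card K = q) (hdeg : Module.finrank K L = m) :
    ∃ C : Submodule L (Fin n → L), Module.finrank L C = k ∧ IsNondegenerate K C ∧
      weightSpectrum K C = Set.Icc h m ∧
      (weightSpectrum K C).ncard = m - h + 1 :=
  exists_code_weightSpectrum_Icc_of_gt_general m n k t a h hkn hmn hkm ht ha hh K L hdeg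
end

section
/- Let q be a prime power and let k, n, m be integers with 1 < k < n ≤ m. Let C be a nondegenerate [n,k]_{q^m/q} rank-metric code with minimum distance d (the least element of WS(C)). Set s = max{⌊n/2^{k−1}⌋, 1}. If |WS(C)| = n − s + 1 (i.e., C is L_rk-optimal), then C is not a maximum rank distance (MRD) code, i.e., d ≠ n − k + 1. -/
/-!
All weights lie in `[d, n]`, so `|WS(C)| ≤ n - d + 1`. For an MRD code this is `k`, whereas
`s = max (⌊n / 2^(k-1)⌋, 1) ≤ n - k` because `n < (n - k + 1) 2^(k-1)` once `k ≥ 2`; hence an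
`L_rk`-optimal code has `|WS(C)| = n - s + 1 ≥ k + 1`.
-/

lemma add_lt_mul_two_pow {j i : ℕ} (hj : 2 ≤ j) (hi : 1 ≤ i) : j + i < j * 2 ^ i := by
  induction i, hi using Nat.le_induction with
  | base => omega
  | succ i _ ih =>
    have : 1 ≤ j * 2 ^ i := Nat.one_le_iff_ne_zero.mpr (by positivity)
    rw [pow_succ, ← mul_assoc]
    omega

lemma div_two_pow_pred_lt {n k : ℕ} (hk : 1 < k) (hkn : k < n) :
    n / 2 ^ (k - 1) < n - k + 1 := by
  refine Nat.div_lt_of_lt_mul ?_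
  have := add_lt_mul_two_pow (j := n - k + 1) (i := k - 1) (by omega) (by omega)
  rw [mul_comm]
  omega

section RankMetric

variable {K L : Type*} [Field K] [Field L] [Algebra K L] {n : ℕ}

lemma rankWeight_le (v : Fin n → L) : rankWeight K v ≤ n :=
  (finrank_range_le_card (R := K) v).trans_eq (Fintype.card_fin n)

lemma weightSpectrum_subset_Icc {C : Submodule L (Fin n → L)} {d : ℕ}
    (hd : IsLeast (weightSpectrum K C) d) : weightSpectrum K C ⊆ Set.Icc d n := by
  rintro w ⟨c, hc, hc0, rfl⟩
  exact ⟨hd.2 ⟨c, hc, hc0, rfl⟩, rankWeight_le c⟩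

lemma ncard_weightSpectrum_le {C : Submodule L (Fin n → L)} {d : ℕ}
    (hd : IsLeast (weightSpectrum K C) d) : (weightSpectrum K C).ncard ≤ n + 1 - d :=
  calc (weightSpectrum K C).ncard ≤ (Set.Icc d n).ncard :=
        Set.ncard_le_ncard (weightSpectrum_subset_Icc hd) (Set.finite_Icc d n)
    _ = n + 1 - d := by rw [Set.ncard_eq_toFinset_card', Set.toFinset_Icc, Nat.card_Icc]

end RankMetric

theorem Lrk_optimal_not_MRD_of_le_general (n k : ℕ)
    (hk : 1 < k) (hkn : k < n)
    (K L : Type) [Field K] [Field L] [Algebra K L]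
    (C : Submodule L (Fin n → L))
    (d : ℕ) (hd : IsLeast (weightSpectrum K C) d)
    (hopt : (weightSpectrum K C).ncard = n - max (n / 2 ^ (k - 1)) 1 + 1) :
    d ≠ n - k + 1 := by
  intro hMRD
  have hspectrum := ncard_weightSpectrum_le hd
  have hs := div_two_pow_pred_lt hk hkn
  omega

/-- An L_rk-optimal nondegenerate [n,k]_{q^m/q} code with 1 < k < n ≤ m is not MRD:
its minimum distance d satisfies d ≠ n − k + 1. -/
theorem Lrk_optimal_not_MRD_of_le (q m n k : ℕ) (hq : IsPrimePow q)
    (hk : 1 < k) (hkn : k < n) (hnm : n ≤ m)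
    (K L : Type) [Field K] [Fintype K] [Field L] [Algebra K L]
    (hcard : Fintype.card K = q) (hdeg : Module.finrank K L = m)
    (C : Submodule L (Fin n → L)) (hdim : Module.finrank L C = k)
    (hnd : IsNondegenerate K C)
    (d : ℕ) (hd : IsLeast (weightSpectrum K C) d)
    (hopt : (weightSpectrum K C).ncard = n - max (n / 2 ^ (k - 1)) 1 + 1) :
    d ≠ n - k + 1 :=
  Lrk_optimal_not_MRD_of_le_general n k hk hkn K L C d hd hopt
end
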